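/- arXiv:1009.4440 — 8 statements merged into one kernel-verified Lean document; each statement's English description precedes it below -/
import Mathlib

section
/- Let k ≥ 2 and let G be a finite connected simple graph whose chromatic number is at most k. If the strong k-colour graph S_k(G) is connected, then G has at least k+1 vertices, and there is no partition of the vertex set of G into two nonempty parts A and B such that every vertex of A is adjacent in G to every vertex of B (i.e., G contains no complete bipartite graph as a spanning subgraph). -/
/-- A strong `k`-colouring of `G`: a proper colouring using all `k` colours. -/
def IsStrongColoring {V : Type*} {k : ℕ} (G : SimpleGraph V) (α : V → Fin k) : Prop :=
  (∀ ⦃u v⦄, G.Adj u v → α u ≠ α v) ∧ Function.Surjective α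

/-- The strong `k`-colour graph `S_k(G)`: vertices are strong `k`-colourings,
two colourings adjacent iff they differ on exactly one vertex. -/
def strongColorGraph {V : Type*} (G : SimpleGraph V) (k : ℕ) :
    SimpleGraph {α : V → Fin k // IsStrongColoring G α} where
  Adj α β := ∃! v, α.1 v ≠ β.1 v
  symm := by
    constructor
    rintro a b ⟨v, hv, hu⟩
    exact ⟨v, hv.symm, fun w hw => hu w hw.symm⟩
  loopless := by
    constructor
    rintro a ⟨v, hv, -⟩
    exact hv rfl

/-!
Permuting the colours of a strong colouring gives a strong colouring, and a nontrivial
permutation gives a different one, since all colours occur. Both claims follow by exhibiting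
two strong colourings in different components of `S_k(G)`.

If `|V| = k`, every strong colouring is a bijection `V → Fin k`, and two bijections cannot
differ at exactly one vertex, so `S_k(G)` has no edges at all.

If `V = A ⊔ B` with every vertex of `A` adjacent to every vertex of `B`, the colour sets
`α(A)` and `α(B)` partition `Fin k`. Recolouring a single vertex changes at most one of
them, hence neither, so `α(A)` is constant on components; swapping a colour of `A` with a
colour of `B` changes it.
-/

theorem SimpleGraph.Reachable.eq_of_forall_adj {X Y : Type*} {H : SimpleGraph X} (f : X → Y)
    (hf : ∀ a b, H.Adj a b → f a = f b) {a b : X} (hab : H.Reachable a b) : f a = f b := by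
  obtain ⟨w⟩ := hab
  induction w with
  | nil => rfl
  | cons hadj _ ih => exact (hf _ _ hadj).trans ih

section

variable {V : Type*} {k : ℕ} {G : SimpleGraph V}

namespace IsStrongColoring

theorem perm_comp {α : V → Fin k} (hα : IsStrongColoring G α) (e : Equiv.Perm (Fin k)) :
    IsStrongColoring G (e ∘ α) :=
  ⟨fun _ _ huv h => hα.1 huv (e.injective h), e.surjective.comp hα.2⟩

theorem perm_comp_ne {α : V → Fin k} (hα : IsStrongColoring G α) {e : Equiv.Perm (Fin k)}
    (he : e ≠ 1) : e ∘ α ≠ α := fun h =>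
  he (DFunLike.coe_injective (hα.2.injective_comp_right (h.trans (Function.id_comp α).symm)))

theorem card_le [Fintype V] {α : V → Fin k} (hα : IsStrongColoring G α) :
    k ≤ Fintype.card V := by
  simpa using Fintype.card_le_of_surjective α hα.2

theorem bijective_of_card_eq [Fintype V] {α : V → Fin k} (hα : IsStrongColoring G α)
    (hcard : Fintype.card V = k) : Function.Bijective α :=
  (Fintype.bijective_iff_surjective_and_card α).2 ⟨hα.2, by simp [hcard]⟩

theorem image_eq_compl_image_compl {α : V → Fin k} (hα : IsStrongColoring G α) {A : Set V}
    (hA : ∀ u ∈ A, ∀ v ∈ Aᶜ, G.Adj u v) : α '' A = (α '' Aᶜ)ᶜ := by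
  ext c
  constructor
  · rintro ⟨u, hu, rfl⟩ ⟨v, hv, hvu⟩
    exact hα.1 (hA u hu v hv) hvu.symm
  · intro hc
    obtain ⟨x, rfl⟩ := hα.2 c
    by_contra hx
    exact hc ⟨x, fun hxA => hx ⟨x, hxA, rfl⟩, rfl⟩

end IsStrongColoring

theorem strongColorGraph_adj_exists_forall_ne {a b : {α : V → Fin k // IsStrongColoring G α}}
    (hab : (strongColorGraph G k).Adj a b) : ∃ v, a.1 v ≠ b.1 v ∧ ∀ w ≠ v, a.1 w = b.1 w := by
  obtain ⟨v, hv, huniq⟩ := hab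
  exact ⟨v, hv, fun w hw => not_not.1 (mt (huniq w) hw)⟩

theorem strongColorGraph_not_adj_of_card_eq [Fintype V] (hcard : Fintype.card V = k)
    (a b : {α : V → Fin k // IsStrongColoring G α}) : ¬(strongColorGraph G k).Adj a b := by
  intro hab
  obtain ⟨v, hv, heq⟩ := strongColorGraph_adj_exists_forall_ne hab
  obtain ⟨w, hw⟩ := (a.2.bijective_of_card_eq hcard).2 (b.1 v)
  have hwv : w ≠ v := by rintro rfl; exact hv hw
  exact hwv ((b.2.bijective_of_card_eq hcard).1 ((heq w hwv).symm.trans hw))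

theorem strongColorGraph_image_eq_of_adj {A : Set V} (hA : ∀ u ∈ A, ∀ v ∈ Aᶜ, G.Adj u v)
    {a b : {α : V → Fin k // IsStrongColoring G α}} (hab : (strongColorGraph G k).Adj a b) :
    a.1 '' A = b.1 '' A := by
  obtain ⟨v, -, heq⟩ := strongColorGraph_adj_exists_forall_ne hab
  by_cases hvA : v ∈ A
  · have hcompl : a.1 '' Aᶜ = b.1 '' Aᶜ :=
      Set.image_congr fun x hx => heq x fun hxv => hx (hxv ▸ hvA)
    rw [a.2.image_eq_compl_image_compl hA, b.2.image_eq_compl_image_compl hA, hcompl]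
  · exact Set.image_congr fun x hx => heq x fun hxv => hvA (hxv ▸ hx)

theorem card_lt_of_strongColorGraph_connected [Fintype V] (hk : 2 ≤ k)
    (hS : (strongColorGraph G k).Connected) : k < Fintype.card V := by
  obtain ⟨α⟩ := hS.nonempty
  refine lt_of_le_of_ne α.2.card_le fun hcard => ?_
  set e := Equiv.swap (⟨0, by omega⟩ : Fin k) ⟨1, by omega⟩
  have he : e ≠ 1 := mt Equiv.swap_eq_one_iff.1 (by simp [Fin.ext_iff])
  let β : {α : V → Fin k // IsStrongColoring G α} := ⟨e ∘ α.1, α.2.perm_comp e⟩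
  have hβα : β = α := (hS.preconnected β α).eq_of_forall_adj id
    fun a b hab => (strongColorGraph_not_adj_of_card_eq hcard.symm a b hab).elim
  exact α.2.perm_comp_ne he (congrArg Subtype.val hβα)

theorem not_exists_spanning_complete_bipartite_of_strongColorGraph_connected
    (hS : (strongColorGraph G k).Connected) :
    ¬∃ A : Set V, A.Nonempty ∧ Aᶜ.Nonempty ∧ ∀ u ∈ A, ∀ v ∈ Aᶜ, G.Adj u v := by
  rintro ⟨A, ⟨u, hu⟩, ⟨v, hv⟩, hA⟩
  obtain ⟨α⟩ := hS.nonempty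
  let β : {α : V → Fin k // IsStrongColoring G α} :=
    ⟨_, α.2.perm_comp (Equiv.swap (α.1 u) (α.1 v))⟩
  have hβα : β.1 '' A = α.1 '' A :=
    (hS.preconnected β α).eq_of_forall_adj (fun γ => γ.1 '' A)
      fun _ _ => strongColorGraph_image_eq_of_adj hA
  have hvβ : α.1 v ∈ β.1 '' A := ⟨u, hu, Equiv.swap_apply_left _ _⟩
  rw [hβα, α.2.image_eq_compl_image_compl hA] at hvβ
  exact hvβ ⟨v, hv, rfl⟩

end

theorem strongColorGraph_connected_card_and_no_spanning_complete_bipartite_general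
    {V : Type*} [Fintype V] {k : ℕ} (hk : 2 ≤ k)
    (G : SimpleGraph V)
    (hS : (strongColorGraph G k).Connected) :
    k + 1 ≤ Fintype.card V ∧
      ¬∃ A : Set V, A.Nonempty ∧ Aᶜ.Nonempty ∧ ∀ u ∈ A, ∀ v ∈ Aᶜ, G.Adj u v :=
  ⟨card_lt_of_strongColorGraph_connected hk hS,
    not_exists_spanning_complete_bipartite_of_strongColorGraph_connected hS⟩

/-- If `k ≥ 2`, `G` is a finite connected graph with chromatic number at most `k`
and the strong `k`-colour graph `S_k(G)` is connected, then `G` has at least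
`k+1` vertices and `G` has no complete bipartite spanning subgraph. -/
theorem strongColorGraph_connected_card_and_no_spanning_complete_bipartite
    {V : Type*} [Fintype V] {k : ℕ} (hk : 2 ≤ k)
    (G : SimpleGraph V) (hG : G.Connected) (hχ : G.chromaticNumber ≤ k)
    (hS : (strongColorGraph G k).Connected) :
    k + 1 ≤ Fintype.card V ∧
      ¬∃ A : Set V, A.Nonempty ∧ Aᶜ.Nonempty ∧ ∀ u ∈ A, ∀ v ∈ Aᶜ, G.Adj u v :=
  strongColorGraph_connected_card_and_no_spanning_complete_bipartite_general hk G hS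
end

section
/- For all integers k ≥ 2 and m, n ≥ 1, the strong k-colour graph S_k(K_{m,n}) of the complete bipartite graph K_{m,n} is not connected. -/
theorem IsStrongColoring.perm_comp_s1 {V : Type*} {k : ℕ} {G : SimpleGraph V} {α : V → Fin k}
    (hα : IsStrongColoring G α) (e : Equiv.Perm (Fin k)) : IsStrongColoring G (e ∘ α) :=
  ⟨fun _ _ huv h => hα.1 huv (e.injective h), e.surjective.comp hα.2⟩

section CompleteBipartite

variable {W X : Type*} {k : ℕ}

theorem IsStrongColoring.completeBipartite_inl_ne_inr {α : W ⊕ X → Fin k}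
    (hα : IsStrongColoring (completeBipartiteGraph W X) α) (i : W) (j : X) :
    α (.inl i) ≠ α (.inr j) :=
  hα.1 (by simp)

theorem strongColorGraph_completeBipartite_range_inl_subset_of_adj
    {x y : {α : W ⊕ X → Fin k // IsStrongColoring (completeBipartiteGraph W X) α}}
    (hxy : (strongColorGraph (completeBipartiteGraph W X) k).Adj x y) :
    Set.range (x.1 ∘ .inl) ⊆ Set.range (y.1 ∘ .inl) := by
  obtain ⟨v, hv, hunique⟩ := hxy
  rintro _ ⟨i, rfl⟩
  by_cases hvi : v = .inl i
  · subst hvi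
    obtain ⟨w, hw⟩ := y.2.2 (x.1 (.inl i))
    have hxw : x.1 w = y.1 w := by
      by_contra hne
      exact hv (hunique w hne ▸ hw.symm)
    rcases w with j | j
    · exact ⟨j, hw⟩
    · exact absurd (hxw.trans hw).symm (x.2.completeBipartite_inl_ne_inr i j)
  · refine ⟨i, ?_⟩
    by_contra hne
    exact hvi (hunique _ (Ne.symm hne)).symm

theorem strongColorGraph_completeBipartite_range_inl_subset_of_reachable
    {x y : {α : W ⊕ X → Fin k // IsStrongColoring (completeBipartiteGraph W X) α}}
    (hxy : (strongColorGraph (completeBipartiteGraph W X) k).Reachable x y) :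
    Set.range (x.1 ∘ .inl) ⊆ Set.range (y.1 ∘ .inl) := by
  obtain ⟨p⟩ := hxy
  induction p with
  | nil => exact Set.Subset.rfl
  | cons hadj _ ih =>
    exact (strongColorGraph_completeBipartite_range_inl_subset_of_adj hadj).trans ih

end CompleteBipartite

theorem strongColorGraph_completeBipartiteGraph_not_connected_general
    {k m n : ℕ} (hm : 1 ≤ m) (hn : 1 ≤ n) :
    ¬(strongColorGraph (completeBipartiteGraph (Fin m) (Fin n)) k).Connected := by
  intro hconn
  obtain ⟨⟨α, hα⟩⟩ := hconn.nonempty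
  let i₀ : Fin m := ⟨0, hm⟩
  let j₀ : Fin n := ⟨0, hn⟩
  let swap := Equiv.swap (α (.inl i₀)) (α (.inr j₀))
  obtain ⟨i, hi⟩ := strongColorGraph_completeBipartite_range_inl_subset_of_reachable
    (hconn.preconnected ⟨α, hα⟩ ⟨swap ∘ α, hα.perm_comp_s1 swap⟩) ⟨i₀, rfl⟩
  have hj₀ : (swap ∘ α) (.inr j₀) = α (.inl i₀) := Equiv.swap_apply_right _ _
  exact (hα.perm_comp_s1 swap).completeBipartite_inl_ne_inr i j₀ (hi.trans hj₀.symm)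

/-- For all `k ≥ 2` and `m, n ≥ 1`, the strong `k`-colour graph of the complete
bipartite graph `K_{m,n}` is not connected. -/
theorem strongColorGraph_completeBipartiteGraph_not_connected
    {k m n : ℕ} (hk : 2 ≤ k) (hm : 1 ≤ m) (hn : 1 ≤ n) :
    ¬(strongColorGraph (completeBipartiteGraph (Fin m) (Fin n)) k).Connected :=
  strongColorGraph_completeBipartiteGraph_not_connected_general hm hn
end

section
/- Let k ≥ 2 and let G be a finite connected simple graph whose chromatic number is at most k such that the strong k-colour graph S_k(G) is connected. Let G* be the graph obtained from G by adding one new vertex v* and joining v* to exactly j vertices of G, where 1 ≤ j ≤ k − 2. Then S_k(G*) is connected. -/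
/-- The graph obtained from `G` by adding one new vertex (`none`) joined
exactly to the vertices in `s`. -/
def addVertex {V : Type*} (G : SimpleGraph V) (s : Set V) : SimpleGraph (Option V) :=
  SimpleGraph.fromRel (fun x y =>
    (∃ u v, x = some u ∧ y = some v ∧ G.Adj u v) ∨ (x = none ∧ ∃ v ∈ s, y = some v))

/-!
A strong colouring of `G*` whose restriction to `G` is still surjective is the lift of a strong
colouring of `G` with a free colour at the new vertex `v*`, and lifts can follow every walk of
`S_k(G)`: since `|s| + 1 < k`, before each step `v*` can move to a colour avoiding both its
neighbours and the colour about to be introduced. So it suffices to reach, from any `β₀`, a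
colouring whose restriction is surjective.

If that is impossible, the colour `c` of `v*` is missing from `G` throughout the component of
`β₀`. A vertex whose colour is ever repeated then lies in `s` (else recolour it with `c`) and is
adjacent to every vertex whose colour is never repeated (else give it that vertex's colour). By
this complete join, the never-repeated vertices, one of which lies outside `s`, keep their
unique colours along every walk of `S_k(G)` starting from `β₀` with a repeated vertex
recoloured to `c`; permuting colours contradicts the connectivity of `S_k(G)`.
-/

open Function SimpleGraph

theorem SimpleGraph.Reachable.induction_on {V : Type*} {G : SimpleGraph V} {P : V → Prop}
    {u v : V} (h : G.Reachable u v) (hu : P u)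
    (step : ∀ w x, G.Reachable u w → P w → G.Adj w x → P x) : P v := by
  rw [reachable_iff_reflTransGen] at h
  induction h with
  | refl => exact hu
  | tail huw hwx ih => exact step _ _ ((reachable_iff_reflTransGen _ _).2 huw) ih hwx

theorem Function.not_injective_of_not_surjective {α β : Type*} [Finite β] {f g : α → β}
    (hg : Surjective g) (hf : ¬Surjective f) : ¬Injective f := fun hinj =>
  hf (Finite.injective_iff_surjective.1 (hinj.comp (injective_surjInv hg))).of_comp

theorem Fin.exists_notMem_of_card_lt {k : ℕ} {A : Finset (Fin k)} (hA : A.card < k) :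
    ∃ a, a ∉ A := by
  obtain ⟨a, -, ha⟩ :=
    Finset.exists_mem_notMem_of_card_lt_card (s := A) (t := Finset.univ) (by simpa using hA)
  exact ⟨a, ha⟩

abbrev StrongColoring {W : Type*} (H : SimpleGraph W) (k : ℕ) :=
  {α : W → Fin k // IsStrongColoring H α}

section StrongColorGraph

variable {W : Type*} {H : SimpleGraph W} {k : ℕ}

theorem IsStrongColoring.equiv_comp {α : W → Fin k} (hα : IsStrongColoring H α)
    (σ : Fin k ≃ Fin k) : IsStrongColoring H (σ ∘ α) :=
  ⟨fun _ _ huv h => hα.1 huv (σ.injective h), σ.surjective.comp hα.2⟩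

theorem isStrongColoring_update [DecidableEq W] {α : W → Fin k}
    (hα : ∀ ⦃u v⦄, H.Adj u v → α u ≠ α v) {x z : W} (hzx : z ≠ x) (hz : α z = α x)
    {c : Fin k} (hc : ∀ y, H.Adj x y → α y ≠ c) (hrange : ∀ d ≠ c, ∃ v, α v = d) :
    IsStrongColoring H (update α x c) := by
  refine ⟨fun u v huv => ?_, fun d => ?_⟩
  · rcases eq_or_ne u x with rfl | hu
    · rw [update_self, update_of_ne huv.ne.symm]
      exact (hc v huv).symm
    · rcases eq_or_ne v x with rfl | hv
      · rw [update_self, update_of_ne hu]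
        exact hc u huv.symm
      · rw [update_of_ne hu, update_of_ne hv]
        exact hα huv
  · rcases eq_or_ne d c with rfl | hd
    · exact ⟨x, update_self ..⟩
    · obtain ⟨v, rfl⟩ := hrange d hd
      rcases eq_or_ne v x with rfl | hv
      · exact ⟨z, by rw [update_of_ne hzx, hz]⟩
      · exact ⟨v, update_of_ne hv ..⟩

theorem strongColorGraph_adj_iff {a b : StrongColoring H k} :
    (strongColorGraph H k).Adj a b ↔ ∃ w, a.1 w ≠ b.1 w ∧ ∀ z ≠ w, a.1 z = b.1 z :=
  exists_congr fun _ => and_congr_right fun _ => forall_congr' fun _ => not_imp_comm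

theorem strongColorGraph_adj_update [DecidableEq W] (a : StrongColoring H k) {x : W}
    {c : Fin k} (hc : a.1 x ≠ c) (h : IsStrongColoring H (update a.1 x c)) :
    (strongColorGraph H k).Adj a ⟨_, h⟩ :=
  strongColorGraph_adj_iff.2 ⟨x, by simpa using hc, fun _ hz => (update_of_ne hz ..).symm⟩

theorem exists_ne_apply_eq_of_strongColorGraph_adj {a b : StrongColoring H k}
    (h : (strongColorGraph H k).Adj a b) {w : W} (hw : a.1 w ≠ b.1 w) :
    ∃ z ≠ w, a.1 z = a.1 w := by
  obtain ⟨z, hz⟩ := b.2.2 (a.1 w)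
  have hzw : z ≠ w := by
    rintro rfl
    exact hw hz.symm
  exact ⟨z, hzw, (not_not.1 fun hne => hzw (h.unique hne hw)).trans hz⟩

theorem eqOn_of_strongColorGraph_reachable {T : Set W} (hT : ∀ x ∉ T, ∀ y ∈ T, H.Adj x y)
    {γ γ' : StrongColoring H k} (huniq : ∀ y ∈ T, ∀ z ≠ y, γ.1 z ≠ γ.1 y)
    (h : (strongColorGraph H k).Reachable γ γ') : Set.EqOn γ'.1 γ.1 T := by
  suffices ∀ y ∈ T, ∀ z, γ'.1 z = γ.1 y ↔ z = y from fun y hy => (this y hy y).2 rfl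
  refine h.induction_on (P := fun γ' => ∀ y ∈ T, ∀ z, γ'.1 z = γ.1 y ↔ z = y)
    (fun y hy z => ⟨fun hz => by_contra fun hzy => huniq y hy z hzy hz, fun hzy => hzy ▸ rfl⟩)
    fun a b _ ha hab => ?_
  obtain ⟨w, hw, hrest⟩ := strongColorGraph_adj_iff.1 hab
  have hwT : w ∉ T := fun hwT => by
    obtain ⟨z, hzw, hz⟩ := exists_ne_apply_eq_of_strongColorGraph_adj hab hw
    exact hzw ((ha w hwT z).1 (hz.trans ((ha w hwT w).2 rfl)))
  intro y hy z
  have hby : b.1 y = γ.1 y := (hrest y fun h => hwT (h ▸ hy)).symm.trans ((ha y hy y).2 rfl)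
  refine ⟨fun hz => ?_, fun hzy => hzy ▸ hby⟩
  rcases eq_or_ne z w with rfl | hzw
  · exact absurd (hz.trans hby.symm) (b.2.1 (hT z hwT y hy))
  · exact (ha y hy z).1 ((hrest z hzw).trans hz)

def reachablyRepeated (β₀ : StrongColoring H k) : Set W :=
  {x | ∃ β, (strongColorGraph H k).Reachable β₀ β ∧ ∃ z ≠ x, β.1 z = β.1 x}

theorem adj_of_mem_reachablyRepeated [DecidableEq W] {β₀ : StrongColoring H k} {x y : W}
    (hx : x ∈ reachablyRepeated β₀) (hy : y ∉ reachablyRepeated β₀) : H.Adj x y := by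
  obtain ⟨β, hβ, z, hzx, hz⟩ := hx
  by_contra hnadj
  have huniq : ∀ w ≠ y, β.1 w ≠ β.1 y := fun w hw h => hy ⟨β, hβ, w, hw, h⟩
  have hxy : x ≠ y := by
    rintro rfl
    exact hy ⟨β, hβ, z, hzx, hz⟩
  have hstrong := isStrongColoring_update β.2.1 hzx hz
    (fun w hw => huniq w (by rintro rfl; exact hnadj hw)) (fun d _ => β.2.2 d)
  have hadj := strongColorGraph_adj_update β (huniq x hxy) hstrong
  exact hy ⟨_, hβ.trans hadj.reachable, x, hxy, by simp [update_of_ne hxy.symm]⟩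

end StrongColorGraph

section AddVertex

variable {V : Type*} {G : SimpleGraph V} {s : Set V} {k : ℕ}

@[simp]
theorem addVertex_adj_some_some {u v : V} :
    (addVertex G s).Adj (some u) (some v) ↔ G.Adj u v := by
  simp only [addVertex, fromRel_adj, ne_eq, Option.some.injEq, reduceCtorEq, false_and,
    or_false]
  exact ⟨fun ⟨_, h⟩ => h.elim (fun ⟨_, _, hu, hv, h⟩ => hu ▸ hv ▸ h)
      fun ⟨_, _, hv, hu, h⟩ => hu ▸ hv ▸ h.symm,
    fun h => ⟨h.ne, .inl ⟨u, v, rfl, rfl, h⟩⟩⟩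

@[simp]
theorem addVertex_adj_none_some {v : V} : (addVertex G s).Adj none (some v) ↔ v ∈ s := by
  simp [addVertex]

@[simp]
theorem addVertex_adj_some_none {v : V} : (addVertex G s).Adj (some v) none ↔ v ∈ s := by
  simp [addVertex]

theorem surjective_comp_some_iff {α : Type*} {f : Option V → α} (hf : Surjective f) :
    Surjective (f ∘ some) ↔ ∃ v, f (some v) = f none := by
  refine ⟨fun h => h (f none), fun ⟨v, hv⟩ d => ?_⟩
  obtain ⟨_ | u, rfl⟩ := hf d
  exacts [⟨v, hv⟩, ⟨u, rfl⟩]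

theorem apply_some_ne_apply_none {β : StrongColoring (addVertex G s) k}
    (h : ¬Surjective (β.1 ∘ some)) (v : V) : β.1 (some v) ≠ β.1 none :=
  fun hv => h ((surjective_comp_some_iff β.2.2).2 ⟨v, hv⟩)

theorem apply_none_eq_of_reachable {β₀ β : StrongColoring (addVertex G s) k}
    (hstuck : ∀ β, (strongColorGraph (addVertex G s) k).Reachable β₀ β →
      ¬Surjective (β.1 ∘ some))
    (h : (strongColorGraph (addVertex G s) k).Reachable β₀ β) : β.1 none = β₀.1 none := by
  refine h.induction_on (P := fun β => β.1 none = β₀.1 none) rfl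
    fun a b hab ha hadj => by_contra fun hb => ?_
  have hne : a.1 none ≠ b.1 none := ha ▸ Ne.symm hb
  obtain ⟨_ | v, hv⟩ := b.2.2 (a.1 none)
  · exact hne hv.symm
  · have hav : a.1 (some v) = b.1 (some v) :=
      not_not.1 fun h => Option.some_ne_none v (hadj.unique h hne)
    exact apply_some_ne_apply_none (hstuck a hab) v (hav.trans hv)

theorem mem_of_some_mem_reachablyRepeated [DecidableEq V]
    {β₀ : StrongColoring (addVertex G s) k}
    (hstuck : ∀ β, (strongColorGraph (addVertex G s) k).Reachable β₀ β →
      ¬Surjective (β.1 ∘ some))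
    {x : V} (hx : some x ∈ reachablyRepeated β₀) : x ∈ s := by
  obtain ⟨β, hβ, z, hzx, hz⟩ := hx
  by_contra hxs
  have hmiss := apply_some_ne_apply_none (hstuck β hβ)
  have hstrong := isStrongColoring_update β.2.1 hzx hz (c := β.1 none)
    (fun | none, h => absurd (addVertex_adj_some_none.1 h) hxs | some v, _ => hmiss v)
    (fun d _ => β.2.2 d)
  have hadj := strongColorGraph_adj_update β (hmiss x) hstrong
  exact hstuck _ (hβ.trans hadj.reachable)
    ((surjective_comp_some_iff hstrong.2).2 ⟨x, by simp⟩)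

theorem exists_reachable_surjective_comp_some [DecidableEq V]
    (hS : (strongColorGraph G k).Connected) (hs : s ≠ Set.univ)
    (β₀ : StrongColoring (addVertex G s) k) :
    ∃ β, (strongColorGraph (addVertex G s) k).Reachable β₀ β ∧
      Surjective (β.1 ∘ some) := by
  by_contra! hstuck
  set c := β₀.1 none
  set X := {v : V | some v ∈ reachablyRepeated β₀}
  have hmiss : ∀ v, β₀.1 (some v) ≠ c := apply_some_ne_apply_none (hstuck β₀ .rfl)
  obtain ⟨γ⟩ := hS.nonempty
  obtain ⟨z₀, x₀, hdup, hne⟩ :=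
    not_injective_iff.1 (not_injective_of_not_surjective γ.2.2 (hstuck β₀ .rfl))
  obtain ⟨y₀, hy₀⟩ := (Set.ne_univ_iff_exists_notMem s).1 hs
  have hX₀ : x₀ ∈ X := ⟨β₀, .rfl, some z₀, by simpa using hne, hdup⟩
  have hY₀ : y₀ ∉ X := fun h => hy₀ (mem_of_some_mem_reachablyRepeated hstuck h)
  have hyx : y₀ ≠ x₀ := fun h => hY₀ (h ▸ hX₀)
  set δ := update (β₀.1 ∘ some) x₀ c with hδ_def
  have hδ : IsStrongColoring G δ := by
    refine isStrongColoring_update (fun u v h => β₀.2.1 (addVertex_adj_some_some.2 h)) hne hdup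
      (fun v _ => hmiss v) fun d hd => ?_
    obtain ⟨_ | v, rfl⟩ := β₀.2.2 d
    exacts [absurd rfl hd, ⟨v, rfl⟩]
  have hT : ∀ x ∉ Xᶜ, ∀ y ∈ Xᶜ, G.Adj x y := fun x hx y hy =>
    addVertex_adj_some_some.1 (adj_of_mem_reachablyRepeated (not_not.1 hx) hy)
  have huniq : ∀ y ∈ Xᶜ, ∀ z ≠ y, δ z ≠ δ y := by
    intro y hy z hzy
    rw [hδ_def, update_of_ne fun h : y = x₀ => hy (h ▸ hX₀)]
    rcases eq_or_ne z x₀ with rfl | hzx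
    · rw [update_self]
      exact (hmiss y).symm
    · rw [update_of_ne hzx]
      exact fun h => hy ⟨β₀, .rfl, some z, by simpa using hzy, h⟩
  set σ := Equiv.swap c (β₀.1 (some y₀))
  have hfrozen : σ (δ y₀) = δ y₀ := eqOn_of_strongColorGraph_reachable hT huniq
    (hS.preconnected ⟨_, hδ⟩ ⟨_, hδ.equiv_comp σ⟩) hY₀
  rw [hδ_def, update_of_ne hyx, comp_apply, Equiv.swap_apply_right] at hfrozen
  exact hmiss y₀ hfrozen.symm

def addVertexColoring (γ : StrongColoring G k) (a : Fin k) (ha : ∀ v ∈ s, γ.1 v ≠ a) :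
    StrongColoring (addVertex G s) k :=
  ⟨fun z => z.elim a γ.1, by
    refine ⟨?_, fun d => ⟨some (surjInv γ.2.2 d), surjInv_eq γ.2.2 d⟩⟩
    rintro (_ | u) (_ | v) huv
    · exact absurd huv (SimpleGraph.irrefl _)
    · exact (ha v (addVertex_adj_none_some.1 huv)).symm
    · exact ha u (addVertex_adj_some_none.1 huv)
    · exact γ.2.1 (addVertex_adj_some_some.1 huv)⟩

theorem exists_addVertexColoring_eq {β : StrongColoring (addVertex G s) k}
    (hβ : Surjective (β.1 ∘ some)) : ∃ γ a ha, addVertexColoring γ a ha = β :=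
  ⟨⟨β.1 ∘ some, fun _ _ h => β.2.1 (addVertex_adj_some_some.2 h), hβ⟩, β.1 none,
    fun _ hv => β.2.1 (addVertex_adj_some_none.2 hv),
    Subtype.ext (funext fun z => by cases z <;> rfl)⟩

theorem addVertexColoring_reachable_of_eq (γ : StrongColoring G k) {a b : Fin k}
    (ha : ∀ v ∈ s, γ.1 v ≠ a) (hb : ∀ v ∈ s, γ.1 v ≠ b) :
    (strongColorGraph (addVertex G s) k).Reachable (addVertexColoring γ a ha)
      (addVertexColoring γ b hb) := by
  rcases eq_or_ne a b with rfl | hab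
  · rfl
  · exact Adj.reachable <| strongColorGraph_adj_iff.2
      ⟨none, hab, fun | none, h => absurd rfl h | some _, _ => rfl⟩

theorem addVertexColoring_adj {γ γ' : StrongColoring G k} (h : (strongColorGraph G k).Adj γ γ')
    {a : Fin k} (ha : ∀ v ∈ s, γ.1 v ≠ a) (ha' : ∀ v ∈ s, γ'.1 v ≠ a) :
    (strongColorGraph (addVertex G s) k).Adj (addVertexColoring γ a ha)
      (addVertexColoring γ' a ha') := by
  obtain ⟨w, hw, hrest⟩ := strongColorGraph_adj_iff.1 h
  exact strongColorGraph_adj_iff.2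
    ⟨some w, hw, fun | none, _ => rfl | some v, hv => hrest v fun h => hv (h ▸ rfl)⟩

end AddVertex

theorem addVertexColoring_reachable {V : Type*} {G : SimpleGraph V} {k : ℕ} {s : Finset V}
    (hs : s.card + 2 ≤ k) {γ γ' : StrongColoring G k}
    (h : (strongColorGraph G k).Reachable γ γ')
    {a a' : Fin k} (ha : ∀ v ∈ s, γ.1 v ≠ a) (ha' : ∀ v ∈ s, γ'.1 v ≠ a') :
    (strongColorGraph (addVertex G s) k).Reachable (addVertexColoring γ a ha)
      (addVertexColoring γ' a' ha') := by
  classical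
  refine h.induction_on (P := fun δ => ∀ a' (ha' : ∀ v ∈ s, δ.1 v ≠ a'),
      (strongColorGraph (addVertex G s) k).Reachable (addVertexColoring γ a ha)
        (addVertexColoring δ a' ha'))
    (fun _ => addVertexColoring_reachable_of_eq γ ha) (fun δ δ' _ ih hadj a' ha' => ?_) a' ha'
  obtain ⟨w, -, hrest⟩ := strongColorGraph_adj_iff.1 hadj
  obtain ⟨b, hb⟩ := Fin.exists_notMem_of_card_lt (A := insert (δ'.1 w) (s.image δ.1)) <|
    (Finset.card_insert_le _ _).trans_lt (by have := s.card_image_le (f := δ.1); omega)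
  have hbδ : ∀ v ∈ s, δ.1 v ≠ b := fun v hv h =>
    hb (Finset.mem_insert_of_mem (h ▸ Finset.mem_image_of_mem δ.1 hv))
  have hbδ' : ∀ v ∈ s, δ'.1 v ≠ b := fun v hv h => by
    rcases eq_or_ne v w with rfl | hvw
    · exact hb (h ▸ Finset.mem_insert_self _ _)
    · exact hbδ v hv ((hrest v hvw).trans h)
  exact (ih b hbδ).trans <| (addVertexColoring_adj hadj hbδ hbδ').reachable.trans <|
    addVertexColoring_reachable_of_eq δ' hbδ' ha'

theorem Finset.coe_ne_univ_of_card_lt {V : Type*} {k : ℕ} {γ : V → Fin k}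
    (hγ : Surjective γ) {s : Finset V} (hs : s.card < k) : (s : Set V) ≠ Set.univ := by
  classical
  obtain ⟨a, ha⟩ := Fin.exists_notMem_of_card_lt (A := s.image γ) (s.card_image_le.trans_lt hs)
  obtain ⟨y, rfl⟩ := hγ a
  exact (Set.ne_univ_iff_exists_notMem _).2 ⟨y, fun hy => ha (Finset.mem_image_of_mem γ hy)⟩

theorem strongColorGraph_addVertex_connected_general
    {V : Type*} {k j : ℕ} (hk : 2 ≤ k)
    (G : SimpleGraph V)
    (hS : (strongColorGraph G k).Connected)
    (s : Finset V) (hcard : s.card = j) (hj2 : j ≤ k - 2) :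
    (strongColorGraph (addVertex G ↑s) k).Connected := by
  classical
  have hs : s.card + 2 ≤ k := by omega
  obtain ⟨γ₀⟩ := hS.nonempty
  have hsne : (s : Set V) ≠ Set.univ := Finset.coe_ne_univ_of_card_lt γ₀.2.2 (by omega)
  refine (connected_iff _).2 ⟨fun β₁ β₂ => ?_, ?_⟩
  · obtain ⟨β₁', h₁, hβ₁'⟩ := exists_reachable_surjective_comp_some hS hsne β₁
    obtain ⟨β₂', h₂, hβ₂'⟩ := exists_reachable_surjective_comp_some hS hsne β₂
    obtain ⟨γ₁, a₁, ha₁, rfl⟩ := exists_addVertexColoring_eq hβ₁'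
    obtain ⟨γ₂, a₂, ha₂, rfl⟩ := exists_addVertexColoring_eq hβ₂'
    exact h₁.trans <|
      (addVertexColoring_reachable hs (hS.preconnected γ₁ γ₂) ha₁ ha₂).trans h₂.symm
  · obtain ⟨a, ha⟩ := Fin.exists_notMem_of_card_lt (A := s.image γ₀.1)
      (s.card_image_le.trans_lt (by omega))
    exact ⟨addVertexColoring γ₀ a fun v hv h => ha (h ▸ Finset.mem_image_of_mem _ hv)⟩

/-- Adding a new vertex joined to `j` vertices of `G`, with `1 ≤ j ≤ k - 2`,
preserves connectedness of the strong `k`-colour graph. -/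
theorem strongColorGraph_addVertex_connected
    {V : Type*} [Fintype V] {k j : ℕ} (hk : 2 ≤ k)
    (G : SimpleGraph V) (hG : G.Connected) (hχ : G.chromaticNumber ≤ k)
    (hS : (strongColorGraph G k).Connected)
    (s : Finset V) (hcard : s.card = j) (hj1 : 1 ≤ j) (hj2 : j ≤ k - 2) :
    (strongColorGraph (addVertex G ↑s) k).Connected :=
  strongColorGraph_addVertex_connected_general hk G hS s hcard hj2
end

section
/- Let k ≥ 2 and let G be a finite connected simple graph whose chromatic number is at most k such that the strong k-colour graph S_k(G) is connected. Let v be a vertex of G with neighbourhood N(v), and let N* be a nonempty subset of N(v). Let G* be the graph obtained from G by adding one new vertex v* and joining v* to exactly the vertices in N*. Then S_k(G*) is connected. -/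
/-!
Colour the new vertex like `v`. Its neighbours are neighbours of `v`, so this embeds `S_k(G)`
into `S_k(G*)`, and paths lift. It remains to join an arbitrary `γ` to such an extension. If the
restriction of `γ` to `G` uses all colours, recolour the new vertex. Otherwise the colour `c` of
the new vertex is missing on `G`; walk through the `c`-avoiding colourings of `G` until `v` shares
its colour with another vertex, then recolour `v` with `c`.

Such a walk exists: if `v` could never repeat a colour, every vertex that can repeat is adjacent
to every vertex that cannot, so along any path in `S_k(G)` the never-repeating vertices keep their
colours, and these stay unique. Recolouring a repeated vertex with `c` and then exchanging `c` with
the colour of `v` yields two strong colourings that no path joins.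
-/

open SimpleGraph Function Set

namespace StrongColorGraph

variable {V W α : Type*} {k : ℕ}

def IsProperColoring (G : SimpleGraph V) (f : V → α) : Prop :=
  ∀ ⦃u v⦄, G.Adj u v → f u ≠ f v

abbrev StrongColoring (G : SimpleGraph V) (k : ℕ) := {f : V → Fin k // IsStrongColoring G f}

lemma IsProperColoring.update [DecidableEq V] {G : SimpleGraph V} {f : V → α}
    (hf : IsProperColoring G f) {x : V} {e : α} (he : ∀ z, G.Adj x z → f z ≠ e) :
    IsProperColoring G (update f x e) := by
  intro a b hab
  rcases eq_or_ne a x with rfl | ha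
  · simpa [hab.ne'] using (he b hab).symm
  rcases eq_or_ne b x with rfl | hb
  · simpa [ha] using he a hab.symm
  simpa [ha, hb] using hf hab

lemma range_update_of_eq [DecidableEq V] {f : V → α} {x y : V} (hyx : y ≠ x) (hy : f y = f x)
    (e : α) : range (update f x e) = insert e (range f) := by
  ext a
  simp only [mem_range, mem_insert_iff, update_apply]
  constructor
  · rintro ⟨z, rfl⟩
    split_ifs <;> simp
  · rintro (rfl | ⟨z, rfl⟩)
    · exact ⟨x, by simp⟩
    · rcases eq_or_ne z x with rfl | hz
      · exact ⟨y, by simp [hyx, hy]⟩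
      · exact ⟨z, by simp [hz]⟩

lemma _root_.IsStrongColoring.comp_perm {G : SimpleGraph V} {f : V → Fin k}
    (hf : IsStrongColoring G f) (σ : Equiv.Perm (Fin k)) : IsStrongColoring G (σ ∘ f) :=
  ⟨fun _ _ hab => σ.injective.ne (hf.1 hab), σ.surjective.comp hf.2⟩

section strongColorGraph

variable {H : SimpleGraph W}

lemma strongColorGraph_reachable_of_eq_off {A B : StrongColoring H k} (x : W)
    (h : ∀ y ≠ x, A.1 y = B.1 y) : (strongColorGraph H k).Reachable A B := by
  by_cases hx : A.1 x = B.1 x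
  · obtain rfl : A = B := Subtype.ext <| funext fun y => by
      rcases eq_or_ne y x with rfl | hy
      exacts [hx, h y hy]
    rfl
  · exact Adj.reachable ⟨x, hx, fun y hy => not_imp_comm.1 (h y) hy⟩

lemma exists_eq_off_of_strongColorGraph_adj {A B : StrongColoring H k}
    (h : (strongColorGraph H k).Adj A B) :
    ∃ x, A.1 x ≠ B.1 x ∧ ∀ y ≠ x, A.1 y = B.1 y := by
  obtain ⟨x, hx, hu⟩ := h
  exact ⟨x, hx, fun y hy => not_imp_comm.1 (hu y) hy⟩

end strongColorGraph

section avoiding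

variable {G : SimpleGraph V} {c : Fin k} {l m : V → Fin k}

/-- The strong `(k - 1)`-colourings of `G` by the colours other than `c`. -/
def IsAvoidingColoring (G : SimpleGraph V) (c : Fin k) (m : V → Fin k) : Prop :=
  IsProperColoring G m ∧ range m = {c}ᶜ

def AvoidingStep (G : SimpleGraph V) (c : Fin k) (m m' : V → Fin k) : Prop :=
  IsAvoidingColoring G c m' ∧ ∃ x, ∀ y ≠ x, m y = m' y

lemma IsAvoidingColoring.ne (h : IsAvoidingColoring G c m) (y : V) : m y ≠ c := by
  simpa [h.2] using mem_range_self (f := m) y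

lemma IsAvoidingColoring.of_reflTransGen (hl : IsAvoidingColoring G c l)
    (h : Relation.ReflTransGen (AvoidingStep G c) l m) : IsAvoidingColoring G c m := by
  induction h with
  | refl => exact hl
  | tail _ hstep _ => exact hstep.1

lemma IsAvoidingColoring.isStrongColoring_update [DecidableEq V] (hm : IsAvoidingColoring G c m)
    {x y : V} (hyx : y ≠ x) (hy : m y = m x) : IsStrongColoring G (update m x c) := by
  refine ⟨hm.1.update fun z _ => hm.ne z, ?_⟩
  rw [← range_eq_univ, range_update_of_eq hyx hy, hm.2, insert_eq, union_compl_self]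

def CanRepeat (G : SimpleGraph V) (c : Fin k) (l : V → Fin k) (x : V) : Prop :=
  ∃ m, Relation.ReflTransGen (AvoidingStep G c) l m ∧ ∃ y ≠ x, m y = m x

lemma CanRepeat.adj (hl : IsAvoidingColoring G c l) {x y : V} (hx : CanRepeat G c l x)
    (hy : ¬ CanRepeat G c l y) : G.Adj x y := by
  classical
  obtain ⟨m, hlm, x', hx'x, hx'⟩ := hx
  have hm := hl.of_reflTransGen hlm
  have hxy : x ≠ y := by rintro rfl; exact hy ⟨m, hlm, x', hx'x, hx'⟩
  -- Otherwise recolour `x` with the colour of `y`, which then repeats.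
  by_contra hadj
  have hm' : IsAvoidingColoring G c (update m x (m y)) := by
    refine ⟨hm.1.update fun z hxz hz => hy ⟨m, hlm, z, ?_, hz⟩, ?_⟩
    · rintro rfl; exact hadj hxz
    · rw [range_update_of_eq hx'x hx', insert_eq_of_mem (mem_range_self y), hm.2]
  refine hy ⟨_, hlm.tail ⟨hm', x, fun z hz => (update_of_ne hz _ _).symm⟩, x, hxy, ?_⟩
  simp [hxy.symm]

def IsFrozen (G : SimpleGraph V) (c : Fin k) (l t : V → Fin k) : Prop :=
  ∀ y, ¬ CanRepeat G c l y → t y = l y ∧ ∀ x ≠ y, t x ≠ l y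

lemma IsFrozen.of_adj (hl : IsAvoidingColoring G c l) {A B : StrongColoring G k}
    (hA : IsFrozen G c l A.1) (hAB : (strongColorGraph G k).Adj A B) :
    IsFrozen G c l B.1 := by
  obtain ⟨x, hxAB, hx⟩ := exists_eq_off_of_strongColorGraph_adj hAB
  -- The old colour of `x` must survive elsewhere, so it was not the unique colour of `x`.
  have hxr : CanRepeat G c l x := by
    by_contra hxr
    obtain ⟨hAx, hxu⟩ := hA x hxr
    obtain ⟨y, hy⟩ := B.2.2 (A.1 x)
    have hyx : y ≠ x := by rintro rfl; exact hxAB hy.symm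
    exact hxu y hyx (by rw [hx y hyx, hy, hAx])
  intro y hy
  have hyx : y ≠ x := by rintro rfl; exact hy hxr
  obtain ⟨hAy, hyu⟩ := hA y hy
  have hBy : B.1 y = l y := (hx y hyx).symm.trans hAy
  refine ⟨hBy, fun z hzy => ?_⟩
  rcases eq_or_ne z x with rfl | hzx
  · exact hBy ▸ B.2.1 (hxr.adj hl hy)
  · exact hx z hzx ▸ hyu z hzy

lemma IsFrozen.of_reachable (hl : IsAvoidingColoring G c l) {A B : StrongColoring G k}
    (hA : IsFrozen G c l A.1) (hAB : (strongColorGraph G k).Reachable A B) :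
    IsFrozen G c l B.1 := by
  rw [reachable_iff_reflTransGen] at hAB
  induction hAB with
  | refl => exact hA
  | tail _ hadj ih => exact ih.of_adj hl hadj

lemma IsAvoidingColoring.exists_ne_eq [Fintype V] (hm : IsAvoidingColoring G c m)
    (hk : k ≤ Fintype.card V) : ∃ x y, x ≠ y ∧ m x = m y := by
  obtain ⟨x, y, hxy, h⟩ := Fintype.exists_ne_map_eq_of_card_lt
    (fun z => (⟨m z, hm.ne z⟩ : {e // e ≠ c}))
    (by have := c.pos; simp only [ne_eq, Fintype.card_subtype_compl, Fintype.card_fin,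
      Fintype.card_unique]; omega)
  exact ⟨x, y, hxy, congrArg Subtype.val h⟩

lemma canRepeat_of_connected [Fintype V] (hS : (strongColorGraph G k).Connected)
    (hl : IsAvoidingColoring G c l) (v : V) : CanRepeat G c l v := by
  classical
  by_contra hv
  obtain ⟨b⟩ := hS.nonempty
  obtain ⟨w, w', hww', hw⟩ :=
    hl.exists_ne_eq (by simpa using Fintype.card_le_of_surjective _ b.2.2)
  have hwr : CanRepeat G c l w := ⟨l, .refl, w', hww'.symm, hw.symm⟩
  have hvw : v ≠ w := by rintro rfl; exact hv hwr
  -- Exchanging `c` with the colour of `v` would move the frozen colour of `v`.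
  set t := update l w c
  have ht : IsStrongColoring G t := hl.isStrongColoring_update hww'.symm hw.symm
  have hσt := ht.comp_perm (Equiv.swap (l v) c)
  have hfrozen : IsFrozen G c l t := by
    intro y hy
    have hyw : y ≠ w := by rintro rfl; exact hy hwr
    refine ⟨update_of_ne hyw _ _, fun x hxy => ?_⟩
    rcases eq_or_ne x w with rfl | hxw
    · simpa [t] using (hl.ne y).symm
    · simpa [t, hxw] using fun h => hy ⟨l, .refl, x, hxy, h⟩
  have hv' : Equiv.swap (l v) c (t v) = l v :=
    (hfrozen.of_reachable (B := ⟨_, hσt⟩) hl (hS.preconnected ⟨t, ht⟩ _) v hv).1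
  simp only [t, update_of_ne hvw, Equiv.swap_apply_left] at hv'
  exact hl.ne v hv'.symm

end avoiding

section addVertex

variable {G : SimpleGraph V} {N : Set V}

@[simp]
lemma addVertex_adj_some_some {a b : V} : (addVertex G N).Adj (some a) (some b) ↔ G.Adj a b := by
  simpa [addVertex, G.adj_comm] using Adj.ne

@[simp]
lemma addVertex_adj_none_some {b : V} : (addVertex G N).Adj none (some b) ↔ b ∈ N := by
  simp [addVertex]

lemma isProperColoring_addVertex_iff {f : Option V → α} :
    IsProperColoring (addVertex G N) f ↔
      IsProperColoring G (f ∘ some) ∧ ∀ n ∈ N, f (some n) ≠ f none := by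
  refine ⟨fun h => ⟨fun a b hab => h (addVertex_adj_some_some.2 hab),
    fun n hn => (h (addVertex_adj_none_some.2 hn)).symm⟩, ?_⟩
  rintro ⟨hG, hN⟩ (_ | a) (_ | b) hab
  · exact absurd rfl hab.ne
  · exact (hN b (addVertex_adj_none_some.1 hab)).symm
  · exact hN a (addVertex_adj_none_some.1 hab.symm)
  · exact hG (addVertex_adj_some_some.1 hab)

lemma isStrongColoring_addVertex_elim_iff {d : Fin k} {f : V → Fin k} :
    IsStrongColoring (addVertex G N) (fun o => o.elim d f) ↔
      IsProperColoring G f ∧ (∀ n ∈ N, f n ≠ d) ∧ insert d (range f) = univ := by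
  rw [← and_assoc, ← Option.range_elim, range_eq_univ]
  exact and_congr_left' isProperColoring_addVertex_iff

variable {v : V}

def extendColoring (hN : N ⊆ G.neighborSet v) (b : StrongColoring G k) :
    StrongColoring (addVertex G N) k :=
  ⟨fun o => o.elim (b.1 v) b.1, isStrongColoring_addVertex_elim_iff.2
    ⟨b.2.1, fun _ hn => (b.2.1 (hN hn)).symm, by simp [range_eq_univ.2 b.2.2]⟩⟩

lemma reachable_extendColoring_of_adj (hN : N ⊆ G.neighborSet v) {b b' : StrongColoring G k}
    (h : (strongColorGraph G k).Adj b b') :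
    (strongColorGraph (addVertex G N) k).Reachable
      (extendColoring hN b) (extendColoring hN b') := by
  obtain ⟨x, -, hx⟩ := exists_eq_off_of_strongColorGraph_adj h
  -- Recolour `x` first, keeping the new vertex at `b v`; this stays proper since if `x ∈ N`
  -- then `x ≠ v`, so `b' v = b v`.
  have hmid : IsStrongColoring (addVertex G N) (fun o => o.elim (b.1 v) b'.1) := by
    refine isStrongColoring_addVertex_elim_iff.2
      ⟨b'.2.1, fun n hn => ?_, by simp [range_eq_univ.2 b'.2.2]⟩
    have hvn : G.Adj v n := hN hn
    rcases eq_or_ne n x with rfl | hnx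
    · rw [hx v hvn.ne]
      exact (b'.2.1 hvn).symm
    · rw [← hx n hnx]
      exact (b.2.1 hvn).symm
  refine (strongColorGraph_reachable_of_eq_off (A := extendColoring hN b) (B := ⟨_, hmid⟩)
    (some x) ?_).trans (strongColorGraph_reachable_of_eq_off none ?_)
  · rintro (_ | y) hy
    exacts [rfl, hx y (by simpa using hy)]
  · rintro (_ | y) hy
    exacts [absurd rfl hy, rfl]

lemma reachable_extendColoring (hN : N ⊆ G.neighborSet v) {b b' : StrongColoring G k}
    (h : (strongColorGraph G k).Reachable b b') :
    (strongColorGraph (addVertex G N) k).Reachable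
      (extendColoring hN b) (extendColoring hN b') := by
  rw [reachable_iff_reflTransGen] at h ⊢
  exact Relation.ReflTransGen.lift' (extendColoring hN) (fun _ _ hadj =>
    (reachable_iff_reflTransGen _ _).1 (reachable_extendColoring_of_adj hN hadj)) _ _ h

end addVertex

section reconfiguration

variable {G : SimpleGraph V} {N : Set V} {c : Fin k} {l m : V → Fin k}

lemma IsAvoidingColoring.isStrongColoring_addVertex (hm : IsAvoidingColoring G c m) :
    IsStrongColoring (addVertex G N) (fun o => o.elim c m) :=
  isStrongColoring_addVertex_elim_iff.2
    ⟨hm.1, fun n _ => hm.ne n, by rw [hm.2, insert_eq, union_compl_self]⟩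

lemma reachable_elim_of_reflTransGen (hl : IsAvoidingColoring G c l)
    (h : Relation.ReflTransGen (AvoidingStep G c) l m) :
    (strongColorGraph (addVertex G N) k).Reachable ⟨_, hl.isStrongColoring_addVertex⟩
      ⟨_, (hl.of_reflTransGen h).isStrongColoring_addVertex⟩ := by
  induction h with
  | refl => rfl
  | tail _ hstep ih =>
    obtain ⟨-, x, hx⟩ := hstep
    refine ih.trans (strongColorGraph_reachable_of_eq_off (some x) ?_)
    rintro (_ | y) hy
    exacts [rfl, hx y (by simpa using hy)]

lemma exists_reachable_extendColoring [Fintype V] (hS : (strongColorGraph G k).Connected)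
    {v : V} (hN : N ⊆ G.neighborSet v) (γ : StrongColoring (addVertex G N) k) :
    ∃ b, (strongColorGraph (addVertex G N) k).Reachable γ (extendColoring hN b) := by
  classical
  set c := γ.1 none
  set l := γ.1 ∘ some
  have hγ : γ.1 = fun o => o.elim c l := funext fun o => by cases o <;> rfl
  obtain ⟨hl, -, hrange⟩ := isStrongColoring_addVertex_elim_iff.1 (hγ ▸ γ.2)
  by_cases hc : c ∈ range l
  · refine ⟨⟨l, hl, range_eq_univ.1 (by rwa [insert_eq_of_mem hc] at hrange)⟩,
      strongColorGraph_reachable_of_eq_off none ?_⟩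
    rintro (_ | y) hy
    exacts [absurd rfl hy, rfl]
  have hlc : IsAvoidingColoring G c l :=
    ⟨hl, subset_antisymm (fun e he (hec : e = c) => hc (hec ▸ he))
      (fun e he => (hrange ▸ mem_univ e).resolve_left he)⟩
  -- Reach a colouring in which `v` repeats a colour, then move `v` to the colour `c` of the
  -- new vertex.
  obtain ⟨m, hlm, y, hyv, hy⟩ := canRepeat_of_connected hS hlc v
  have hm := hlc.of_reflTransGen hlm
  refine ⟨⟨_, hm.isStrongColoring_update hyv hy⟩, ?_⟩
  rw [show γ = ⟨_, hlc.isStrongColoring_addVertex⟩ from Subtype.ext hγ]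
  refine (reachable_elim_of_reflTransGen hlc hlm).trans
    (strongColorGraph_reachable_of_eq_off (some v) ?_)
  rintro (_ | z) hz
  · simp [extendColoring]
  · simp [extendColoring, update_of_ne (by simpa using hz : z ≠ v)]

end reconfiguration

end StrongColorGraph

open StrongColorGraph in
theorem strongColorGraph_addVertex_neighborSubset_connected_general
    {V : Type*} [Fintype V] {k : ℕ}
    (G : SimpleGraph V)
    (hS : (strongColorGraph G k).Connected)
    (v : V) (N : Set V) (hN : N ⊆ G.neighborSet v) :
    (strongColorGraph (addVertex G N) k).Connected := by
  obtain ⟨b₀⟩ := hS.nonempty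
  refine (connected_iff _).2 ⟨fun γ γ' => ?_, ⟨extendColoring hN b₀⟩⟩
  obtain ⟨b, hb⟩ := exists_reachable_extendColoring hS hN γ
  obtain ⟨b', hb'⟩ := exists_reachable_extendColoring hS hN γ'
  exact hb.trans ((reachable_extendColoring hN (hS.preconnected b b')).trans hb'.symm)

/-- Adding a new vertex joined to a nonempty subset of the neighbourhood of an
existing vertex preserves connectedness of the strong `k`-colour graph. -/
theorem strongColorGraph_addVertex_neighborSubset_connected
    {V : Type*} [Fintype V] {k : ℕ} (hk : 2 ≤ k)
    (G : SimpleGraph V) (hG : G.Connected) (hχ : G.chromaticNumber ≤ k)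
    (hS : (strongColorGraph G k).Connected)
    (v : V) (N : Set V) (hN : N ⊆ G.neighborSet v) (hNne : N.Nonempty) :
    (strongColorGraph (addVertex G N) k).Connected :=
  strongColorGraph_addVertex_neighborSubset_connected_general G hS v N hN
end

section
/- Let G be a finite simple graph, let α be a proper 3-colouring of G with colours {1,2,3}, and let v_1, v_2, ..., v_m, v_1 (m ≥ 3) be a cycle in G. Define the weight of an oriented edge (u,v) under α to be +1 if (α(u),α(v)) ∈ {(1,2),(2,3),(3,1)} and −1 if (α(u),α(v)) ∈ {(2,1),(3,2),(1,3)}, and define the weight of the oriented cycle to be the sum of the weights of the oriented edges (v_1,v_2), (v_2,v_3), ..., (v_{m−1},v_m), (v_m,v_1). If this weight is nonzero, then the 3-colour graph C_3(G) is not connected. -/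
/-- A proper `k`-colouring of `G`. -/
def IsProperColoring {V : Type*} {k : ℕ} (G : SimpleGraph V) (α : V → Fin k) : Prop :=
  ∀ ⦃u v⦄, G.Adj u v → α u ≠ α v

/-- The `k`-colour graph `C_k(G)`: vertices are proper `k`-colourings,
two colourings adjacent iff they differ on exactly one vertex. -/
def colorGraph {V : Type*} (G : SimpleGraph V) (k : ℕ) :
    SimpleGraph {α : V → Fin k // IsProperColoring G α} where
  Adj α β := ∃! v, α.1 v ≠ β.1 v
  symm := by
    constructor
    rintro a b ⟨v, hv, hu⟩
    exact ⟨v, hv.symm, fun w hw => hu w hw.symm⟩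
  loopless := by
    constructor
    rintro a ⟨v, hv, -⟩
    exact hv rfl

/-- The weight of an oriented edge with endpoint colours `a`, `b` in `Fin 3`:
`+1` if `b = a + 1` (cyclically, i.e. `(a,b)` is one of `(1,2), (2,3), (3,1)`),
`-1` if `a = b + 1` (i.e. `(a,b)` is one of `(2,1), (3,2), (1,3)`), else `0`. -/
def edgeWeight (a b : Fin 3) : ℤ :=
  if b = a + 1 then 1 else if a = b + 1 then -1 else 0

/-!
The weight of a cycle is invariant under recolouring a single vertex `w` from `x` to `y`:
both neighbours of `w` along the cycle carry the third colour, so the incoming edge changes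
weight by some `δ` depending only on `x, y` and the outgoing edge by `-δ`; summed over the
cycle these changes telescope. Hence the weight is constant on components of `C_3(G)`, while
exchanging two colours negates it. A colouring of nonzero weight and its image under the
exchange therefore lie in different components.
-/

open Finset

lemma IsProperColoring.comp {V : Type*} {k l : ℕ} {G : SimpleGraph V} {α : V → Fin k}
    (hα : IsProperColoring G α) {f : Fin k → Fin l} (hf : Function.Injective f) :
    IsProperColoring G (f ∘ α) :=
  fun _ _ huv h => hα huv (hf h)

lemma edgeWeight_swap_zero_one (a b : Fin 3) :
    edgeWeight (Equiv.swap 0 1 a) (Equiv.swap 0 1 b) = -edgeWeight a b := by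
  revert a b; decide

lemma edgeWeight_sub_edgeWeight_left (x y c : Fin 3) (hx : x ≠ c) (hy : y ≠ c) :
    edgeWeight y c - edgeWeight x c = 2 * edgeWeight x y := by
  revert x y c; decide

lemma edgeWeight_sub_edgeWeight_right (a x y : Fin 3) (hx : a ≠ x) (hy : a ≠ y) :
    edgeWeight a y - edgeWeight a x = -2 * edgeWeight x y := by
  revert a x y; decide

section CycleWeight

variable {V ι : Type*} [Fintype ι] {G : SimpleGraph V}

/-- The weight of the closed walks `i ↦ v i ↦ v (σ i) ↦ ⋯` under the colouring `β`. -/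
def cycleWeight (v : ι → V) (σ : Equiv.Perm ι) (β : V → Fin 3) : ℤ :=
  ∑ i, edgeWeight (β (v i)) (β (v (σ i)))

lemma cycleWeight_swap_zero_one (v : ι → V) (σ : Equiv.Perm ι) (β : V → Fin 3) :
    cycleWeight v σ (Equiv.swap 0 1 ∘ β) = -cycleWeight v σ β := by
  simp only [cycleWeight, Function.comp_apply, edgeWeight_swap_zero_one, sum_neg_distrib]

lemma edgeWeight_sub_edgeWeight_of_eqOn [DecidableEq V] {β γ : V → Fin 3}
    (hβ : IsProperColoring G β) (hγ : IsProperColoring G γ) {w : V} (hβγ : ∀ u, u ≠ w → β u = γ u)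
    {u u' : V} (huu' : G.Adj u u') :
    edgeWeight (γ u) (γ u') - edgeWeight (β u) (β u') =
      (if u' = w then -2 * edgeWeight (β w) (γ w) else 0) -
        (if u = w then -2 * edgeWeight (β w) (γ w) else 0) := by
  by_cases hu : u = w
  · subst hu
    have hu' : u' ≠ u := huu'.ne.symm
    rw [if_neg hu', if_pos rfl, ← hβγ u' hu',
      edgeWeight_sub_edgeWeight_left _ _ _ (hβ huu') (hβγ u' hu' ▸ hγ huu')]
    ring
  · by_cases hu' : u' = w
    · subst hu'
      rw [if_pos rfl, if_neg hu, ← hβγ u hu,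
        edgeWeight_sub_edgeWeight_right _ _ _ (hβ huu') (hβγ u hu ▸ hγ huu')]
      ring
    · rw [if_neg hu, if_neg hu', hβγ u hu, hβγ u' hu', sub_self, sub_self]

lemma cycleWeight_eq_of_eqOn {v : ι → V} {σ : Equiv.Perm ι} (hadj : ∀ i, G.Adj (v i) (v (σ i)))
    {β γ : V → Fin 3} (hβ : IsProperColoring G β) (hγ : IsProperColoring G γ) {w : V}
    (hβγ : ∀ u, u ≠ w → β u = γ u) :
    cycleWeight v σ β = cycleWeight v σ γ := by
  classical
  set φ : V → ℤ := fun u => if u = w then -2 * edgeWeight (β w) (γ w) else 0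
  have hdiff : cycleWeight v σ γ - cycleWeight v σ β = ∑ i, (φ (v (σ i)) - φ (v i)) := by
    rw [cycleWeight, cycleWeight, ← sum_sub_distrib]
    exact sum_congr rfl fun i _ => edgeWeight_sub_edgeWeight_of_eqOn hβ hγ hβγ (hadj i)
  rw [sum_sub_distrib, Equiv.sum_comp σ (fun i => φ (v i)), sub_self] at hdiff
  linarith

lemma cycleWeight_eq_of_reachable {v : ι → V} {σ : Equiv.Perm ι}
    (hadj : ∀ i, G.Adj (v i) (v (σ i))) {β γ : {β : V → Fin 3 // IsProperColoring G β}}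
    (h : (colorGraph G 3).Reachable β γ) :
    cycleWeight v σ β.1 = cycleWeight v σ γ.1 := by
  obtain ⟨p⟩ := h
  induction p with
  | nil => rfl
  | @cons β γ _ hstep _ ih =>
    obtain ⟨w, -, hw⟩ := hstep
    exact (cycleWeight_eq_of_eqOn hadj β.2 γ.2
      fun u hu => by_contra fun h => hu (hw u h)).trans ih

end CycleWeight

theorem colorGraph_three_not_connected_of_cycle_weight_ne_zero_general
    {V : Type*} (G : SimpleGraph V)
    (α : V → Fin 3) (hα : IsProperColoring G α)
    {m : ℕ} (v : Fin m → V)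
    (hadj : ∀ i : Fin m, G.Adj (v i) (v (finRotate m i)))
    (hW : ∑ i : Fin m, edgeWeight (α (v i)) (α (v (finRotate m i))) ≠ 0) :
    ¬(colorGraph G 3).Connected := by
  intro hconn
  have hswap := cycleWeight_eq_of_reachable hadj
    (hconn ⟨α, hα⟩ ⟨Equiv.swap 0 1 ∘ α, hα.comp (Equiv.injective _)⟩)
  rw [cycleWeight_swap_zero_one] at hswap
  have hzero : cycleWeight v (finRotate m) α = 0 := by linarith
  exact hW hzero

/-- If some cycle of `G` has nonzero weight under a proper 3-colouring `α`,
then the 3-colour graph `C_3(G)` is not connected.  The cycle is given as an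
injective `v : Fin m → V` with `v i` adjacent to `v (i+1)` cyclically
(`finRotate m` is the cyclic successor on `Fin m`). -/
theorem colorGraph_three_not_connected_of_cycle_weight_ne_zero
    {V : Type*} [Fintype V] (G : SimpleGraph V)
    (α : V → Fin 3) (hα : IsProperColoring G α)
    {m : ℕ} (hm : 3 ≤ m) (v : Fin m → V) (hinj : Function.Injective v)
    (hadj : ∀ i : Fin m, G.Adj (v i) (v (finRotate m i)))
    (hW : ∑ i : Fin m, edgeWeight (α (v i)) (α (v (finRotate m i))) ≠ 0) :
    ¬(colorGraph G 3).Connected :=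
  colorGraph_three_not_connected_of_cycle_weight_ne_zero_general G α hα v hadj hW
end

section
/- The strong colour graph S_4(C_5) of the cycle on 5 vertices is not connected. -/
open Finset SimpleGraph Function

section

variable {V K : Type*} [Fintype V] [DecidableEq V] [Fintype K] [DecidableEq K]

theorem image_compl_singleton_eq_univ_of_surjective {α β : V → K} (hα : Surjective α)
    (hβ : Surjective β) {v : V} (hv : α v ≠ β v) (hrest : ∀ w ≠ v, α w = β w) :
    ({v}ᶜ : Finset V).image α = univ := by
  refine eq_univ_of_forall fun x => ?_
  obtain ⟨w, rfl⟩ := hα x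
  by_cases hw : w = v
  · subst hw
    obtain ⟨u, hu⟩ := hβ (α w)
    have hu' : u ≠ w := by rintro rfl; exact hv hu.symm
    exact mem_image.2 ⟨u, by simpa using hu', (hrest u hu').trans hu⟩
  · exact mem_image_of_mem α (by simpa using hw)

theorem injOn_compl_singleton_of_surjective {α β : V → K} (hα : Surjective α)
    (hβ : Surjective β) (hcard : Fintype.card V = Fintype.card K + 1) {v : V} (hv : α v ≠ β v)
    (hrest : ∀ w ≠ v, α w = β w) : Set.InjOn α ({v}ᶜ : Finset V) := by
  rw [← card_image_iff, image_compl_singleton_eq_univ_of_surjective hα hβ hv hrest, card_univ,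
    card_compl, card_singleton, hcard, Nat.add_sub_cancel]

end

namespace SimpleGraph

theorem cycleGraph_adj_add_one {n : ℕ} (v : Fin (n + 2)) : (cycleGraph (n + 2)).Adj v (v + 1) :=
  cycleGraph_adj.2 (Or.inr (add_sub_cancel_left v 1))

theorem cycleGraph_adj_sub_one {n : ℕ} (v : Fin (n + 2)) : (cycleGraph (n + 2)).Adj v (v - 1) :=
  cycleGraph_adj.2 (Or.inl (sub_sub_cancel v 1))

theorem Reachable.apply_eq_of_forall_adj {V β : Type*} {G : SimpleGraph V} {f : V → β}
    (hf : ∀ ⦃u v⦄, G.Adj u v → f u = f v) {u v : V} (h : G.Reachable u v) : f u = f v := by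
  rw [reachable_iff_reflTransGen] at h
  induction h with
  | refl => rfl
  | tail _ hadj ih => exact ih.trans (hf hadj)

end SimpleGraph

def partner : Fin 4 → Fin 4 := ![1, 0, 3, 2]

def partnerEdge (x y : Fin 4) : ℕ := if y = partner x then 1 else 0

def partnerEdgeCount (α : Fin 5 → Fin 4) : ℕ :=
  ∑ i, partnerEdge (α i) (α (i + 1))

theorem partnerEdge_add_partnerEdge_of_nodup :
    ∀ a b c d : Fin 4, [a, b, c, d].Nodup →
      partnerEdge a b + partnerEdge b d = partnerEdge a c + partnerEdge c d := by
  decide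

theorem partnerEdgeCount_update (α : Fin 5 → Fin 4) (v : Fin 5) (c : Fin 4)
    (h : [α (v - 1), α v, c, α (v + 1)].Nodup) :
    partnerEdgeCount (update α v c) = partnerEdgeCount α := by
  have hloc := partnerEdge_add_partnerEdge_of_nodup _ _ _ _ h
  fin_cases v <;>
    simp only [partnerEdgeCount, Fin.sum_univ_five, update_apply, Fin.zero_eta, Fin.mk_one,
      Fin.reduceFinMk, Fin.isValue, zero_sub, sub_self, show (-1 : Fin 5) = 4 from rfl, zero_add,
      add_eq_right, one_ne_zero, zero_ne_one, Fin.reduceAdd, Fin.reduceSub, Fin.reduceEq,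
      ↓reduceIte] at hloc ⊢ <;>
    omega

theorem partnerEdgeCount_eq_of_adj
    ⦃α β : {α : Fin 5 → Fin 4 // IsStrongColoring (cycleGraph 5) α}⦄
    (h : (strongColorGraph (cycleGraph 5) 4).Adj α β) :
    partnerEdgeCount α.1 = partnerEdgeCount β.1 := by
  obtain ⟨v, hv, huniq⟩ := h
  have hrest : ∀ w ≠ v, α.1 w = β.1 w := fun w hw => by_contra fun hne => hw (huniq w hne)
  have hne : α.1 (v - 1) ≠ α.1 (v + 1) :=
    (injOn_compl_singleton_of_surjective α.2.2 β.2.2 rfl hv hrest).ne (by simp) (by simp)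
      (by grind)
  have hβ : β.1 = update α.1 v (β.1 v) := eq_update_iff.2 ⟨rfl, fun w hw => (hrest w hw).symm⟩
  rw [hβ, partnerEdgeCount_update]
  have hprev := cycleGraph_adj_sub_one v
  have hnext := cycleGraph_adj_add_one v
  grind [List.nodup_cons, α.2.1 hprev, α.2.1 hnext, β.2.1 hprev, β.2.1 hnext]

/-- The strong colour graph `S_4(C_5)` is not connected. -/
theorem strongColorGraph_cycleGraph_five_four_not_connected :
    ¬(strongColorGraph (SimpleGraph.cycleGraph 5) 4).Connected := by
  intro hconn
  have hA : IsStrongColoring (cycleGraph 5) (![0, 1, 0, 2, 3] : Fin 5 → Fin 4) :=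
    ⟨by decide, by decide⟩
  have hB : IsStrongColoring (cycleGraph 5) (![0, 2, 0, 1, 3] : Fin 5 → Fin 4) :=
    ⟨by decide, by decide⟩
  have hcount : partnerEdgeCount ![0, 1, 0, 2, 3] ≠ partnerEdgeCount ![0, 2, 0, 1, 3] := by decide
  exact hcount <|
    (hconn.preconnected ⟨_, hA⟩ ⟨_, hB⟩).apply_eq_of_forall_adj partnerEdgeCount_eq_of_adj
end

section
/- The strong colour graph S_3(I) is connected, where I is the tree on six vertices x_1, x_2, x_3, x_4, x_5, x_6 with edge set {x_1x_2, x_2x_3, x_4x_5, x_5x_6, x_2x_5}. -/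
/-- The tree `I` on six vertices `0,…,5` (standing for `x₁,…,x₆`) with edges
`x₁x₂, x₂x₃, x₄x₅, x₅x₆, x₂x₅`: two paths on three vertices joined by an edge
between their middle vertices. -/
def treeI : SimpleGraph (Fin 6) :=
  SimpleGraph.fromEdgeSet {s(0, 1), s(1, 2), s(3, 4), s(4, 5), s(1, 4)}

/-! In a strong 3-colouring of `I` the centres `x₂, x₅` get distinct colours `a, b`, and the
third colour `c` sits on some leaf. Recolouring leaves one at a time joins any two such
colourings with the same centre colours, through the colouring whose leaves are all `c`.
Once both leaves of `x₂` are coloured `b` and a leaf of `x₅` carries `a`, the centre `x₂` can be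
recoloured to `c`; symmetrically for `x₅`. These two moves connect all six ordered pairs
`(a, b)`. -/

open Function Finset

section StrongColorGraph

variable {V : Type*} {G : SimpleGraph V} {k : ℕ}

instance [Fintype V] [DecidableEq V] [DecidableRel G.Adj] :
    DecidablePred (IsStrongColoring G (k := k)) :=
  fun _ => inferInstanceAs (Decidable (_ ∧ _))

theorem strongColorGraph_adj_update_s17 [DecidableEq V] {α : V → Fin k} (hα : IsStrongColoring G α)
    {v : V} {c : Fin k} (hc : α v ≠ c) (h : IsStrongColoring G (update α v c)) :
    (strongColorGraph G k).Adj ⟨α, hα⟩ ⟨update α v c, h⟩ := by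
  refine ⟨v, by simpa using hc, fun w hw => ?_⟩
  by_contra hwv
  exact hw (update_of_ne hwv c α).symm

theorem update_proper [DecidableEq V] {α β : V → Fin k} (hα : ∀ ⦃u w⦄, G.Adj u w → α u ≠ α w)
    (hβ : ∀ ⦃u w⦄, G.Adj u w → β u ≠ β w) {v : V} (hv : ∀ w, G.Adj v w → α w = β w) :
    ∀ ⦃u w⦄, G.Adj u w → update α v (β v) u ≠ update α v (β v) w := by
  intro u w huw
  rcases eq_or_ne u v with rfl | hu
  · rw [update_self, update_of_ne huw.ne.symm, hv w huw]
    exact hβ huw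
  rcases eq_or_ne w v with rfl | hw
  · rw [update_self, update_of_ne hu, hv u huw.symm]
    exact hβ huw
  · rw [update_of_ne hu, update_of_ne hw]
    exact hα huw

theorem reachable_of_forall_update [Fintype V] [DecidableEq V]
    (P : (V → Fin k) → Prop) (hP : ∀ α, P α → IsStrongColoring G α) {β : V → Fin k}
    (hβ : IsStrongColoring G β) (hupd : ∀ α v, P α → P (update α v (β v)))
    {α : V → Fin k} (hα : P α) :
    (strongColorGraph G k).Reachable ⟨α, hP α hα⟩ ⟨β, hβ⟩ := by
  induction hn : #{v | α v ≠ β v} using Nat.strong_induction_on generalizing α with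
  | _ n ih =>
    by_cases hαβ : α = β
    · subst hαβ; rfl
    obtain ⟨v, hv⟩ := ne_iff.mp hαβ
    have hα' := hupd α v hα
    have hfewer : #{w | update α v (β v) w ≠ β w} < n := by
      rw [← hn]
      refine card_lt_card ((ssubset_iff_of_subset fun w => ?_).2 ⟨v, by simpa using hv, by simp⟩)
      simp only [mem_filter, mem_univ, true_and]
      rcases eq_or_ne w v with rfl | hwv
      · simp
      · simp [update_of_ne hwv]
    exact (strongColorGraph_adj_update_s17 _ hv _).reachable.trans (ih _ hfewer hα' rfl)

theorem surjective_of_three_distinct {α : V → Fin 3} {u v w : V} (huv : α u ≠ α v)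
    (huw : α u ≠ α w) (hvw : α v ≠ α w) : Surjective α := by
  have hcover : ∀ x y z c : Fin 3, x ≠ y → x ≠ z → y ≠ z → c = x ∨ c = y ∨ c = z := by decide
  intro c
  rcases hcover _ _ _ c huv huw hvw with h | h | h
  exacts [⟨u, h.symm⟩, ⟨v, h.symm⟩, ⟨w, h.symm⟩]

end StrongColorGraph

/-- The colour other than `a` and `b` when `a ≠ b`, since `0 + 1 + 2 = 0` in `Fin 3`. -/
def thirdColor (a b : Fin 3) : Fin 3 := -(a + b)

theorem thirdColor_ne_left : ∀ {a b : Fin 3}, a ≠ b → thirdColor a b ≠ a := by decide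

theorem thirdColor_ne_right : ∀ {a b : Fin 3}, a ≠ b → thirdColor a b ≠ b := by decide

instance : DecidableRel treeI.Adj := fun u v =>
  decidable_of_iff (s(u, v) ∈ ({s(0, 1), s(1, 2), s(3, 4), s(4, 5), s(1, 4)} : Finset _) ∧ u ≠ v)
    (by simp [treeI])

theorem treeI_adj_one_four : treeI.Adj 1 4 := by decide

theorem treeI_adj_center {v w : Fin 6} (h : treeI.Adj v w) (hv1 : v ≠ 1) (hv4 : v ≠ 4) :
    w = 1 ∨ w = 4 := by
  revert v w; decide

/-- Recolouring towards `β` keeps the three distinct colours on `x₂`, `x₅` and `u`. -/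
theorem reachable_of_eq_centers {α β : Fin 6 → Fin 3} (hα : IsStrongColoring treeI α)
    (hβ : IsStrongColoring treeI β) (h1 : α 1 = β 1) (h4 : α 4 = β 4) {u : Fin 6}
    (hu : α u = β u) (hu1 : β u ≠ β 1) (hu4 : β u ≠ β 4) :
    (strongColorGraph treeI 3).Reachable ⟨α, hα⟩ ⟨β, hβ⟩ := by
  let P (γ : Fin 6 → Fin 3) : Prop :=
    IsStrongColoring treeI γ ∧ γ 1 = β 1 ∧ γ 4 = β 4 ∧ γ u = β u
  have hupd (γ : Fin 6 → Fin 3) (v : Fin 6) (hγ : P γ) : P (update γ v (β v)) := by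
    obtain ⟨hγ, hγ1, hγ4, hγu⟩ := hγ
    have keep (x : Fin 6) (hx : γ x = β x) : update γ v (β v) x = β x := by
      rcases eq_or_ne x v with rfl | hxv
      · exact update_self ..
      · rw [update_of_ne hxv, hx]
    refine ⟨⟨?_, ?_⟩, keep 1 hγ1, keep 4 hγ4, keep u hγu⟩
    · by_cases hv : γ v = β v
      · rw [← hv, update_eq_self]
        exact hγ.1
      have hv1 : v ≠ 1 := by rintro rfl; exact hv hγ1
      have hv4 : v ≠ 4 := by rintro rfl; exact hv hγ4
      refine update_proper hγ.1 hβ.1 fun w hvw => ?_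
      rcases treeI_adj_center hvw hv1 hv4 with rfl | rfl
      exacts [hγ1, hγ4]
    · refine surjective_of_three_distinct (u := 1) (v := 4) (w := u) ?_ ?_ ?_ <;>
        simp only [keep 1 hγ1, keep 4 hγ4, keep u hγu]
      exacts [hβ.1 treeI_adj_one_four, hu1.symm, hu4.symm]
  exact reachable_of_forall_update P (fun _ h => h.1) hβ hupd ⟨hα, h1, h4, hu⟩

def starColoring (a b : Fin 3) : Fin 6 → Fin 3 :=
  ![thirdColor a b, a, thirdColor a b, thirdColor a b, b, thirdColor a b]

theorem isStrongColoring_starColoring :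
    ∀ {a b : Fin 3}, a ≠ b → IsStrongColoring treeI (starColoring a b) := by
  decide

theorem starColoring_apply_of_ne {a b : Fin 3} {u : Fin 6} (hu1 : u ≠ 1) (hu4 : u ≠ 4) :
    starColoring a b u = thirdColor a b := by
  fin_cases u <;> first | rfl | contradiction

theorem reachable_starColoring {α : Fin 6 → Fin 3} (hα : IsStrongColoring treeI α) :
    (strongColorGraph treeI 3).Reachable ⟨α, hα⟩
      ⟨starColoring (α 1) (α 4), isStrongColoring_starColoring (hα.1 treeI_adj_one_four)⟩ := by
  have h14 := hα.1 treeI_adj_one_four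
  obtain ⟨u, hu⟩ := hα.2 (thirdColor (α 1) (α 4))
  have hu1 : u ≠ 1 := by rintro rfl; exact thirdColor_ne_left h14 hu.symm
  have hu4 : u ≠ 4 := by rintro rfl; exact thirdColor_ne_right h14 hu.symm
  refine reachable_of_eq_centers _ _ rfl rfl (u := u) ?_ ?_ ?_ <;>
    rw [starColoring_apply_of_ne hu1 hu4]
  exacts [hu, thirdColor_ne_left h14, thirdColor_ne_right h14]

theorem reachable_starColoring_thirdColor_left {a b : Fin 3} (hab : a ≠ b) :
    (strongColorGraph treeI 3).Reachable ⟨starColoring a b, isStrongColoring_starColoring hab⟩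
      ⟨starColoring (thirdColor a b) b,
        isStrongColoring_starColoring (thirdColor_ne_right hab)⟩ := by
  let w : Fin 6 → Fin 3 := ![b, a, b, thirdColor a b, b, a]
  have hw : IsStrongColoring treeI w := by revert a b; decide
  have hw' : IsStrongColoring treeI (update w 1 (thirdColor a b)) := by revert a b; decide
  exact (reachable_starColoring hw).symm.trans
    ((strongColorGraph_adj_update_s17 hw (v := 1) (thirdColor_ne_left hab).symm hw').reachable.trans
      (reachable_starColoring hw'))

theorem reachable_starColoring_thirdColor_right {a b : Fin 3} (hab : a ≠ b) :
    (strongColorGraph treeI 3).Reachable ⟨starColoring a b, isStrongColoring_starColoring hab⟩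
      ⟨starColoring a (thirdColor a b),
        isStrongColoring_starColoring (thirdColor_ne_left hab).symm⟩ := by
  let w : Fin 6 → Fin 3 := ![b, a, thirdColor a b, a, b, a]
  have hw : IsStrongColoring treeI w := by revert a b; decide
  have hw' : IsStrongColoring treeI (update w 4 (thirdColor a b)) := by revert a b; decide
  exact (reachable_starColoring hw).symm.trans
    ((strongColorGraph_adj_update_s17 hw (v := 4) (thirdColor_ne_right hab).symm hw').reachable.trans
      (reachable_starColoring hw'))

theorem reachable_starColoring_zero_one {a b : Fin 3} (hab : a ≠ b) :
    (strongColorGraph treeI 3).Reachable ⟨starColoring a b, isStrongColoring_starColoring hab⟩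
      ⟨starColoring 0 1, isStrongColoring_starColoring Fin.zero_ne_one⟩ := by
  have left {a b : Fin 3} (hab : a ≠ b) := reachable_starColoring_thirdColor_left hab
  have right {a b : Fin 3} (hab : a ≠ b) := reachable_starColoring_thirdColor_right hab
  fin_cases a <;> fin_cases b <;> simp only [ne_eq, not_true_eq_false] at hab
  · rfl
  · exact right (a := 0) (b := 2) hab
  · exact (left (a := 1) (b := 0) hab).trans ((right (a := 2) (b := 0) (by decide)).trans
      (left (a := 2) (b := 1) (by decide)))
  · exact (left (a := 1) (b := 2) hab).trans (right (a := 0) (b := 2) (by decide))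
  · exact (right (a := 2) (b := 0) hab).trans (left (a := 2) (b := 1) (by decide))
  · exact left (a := 2) (b := 1) hab

/-- The strong colour graph `S_3(I)` is connected. -/
theorem strongColorGraph_treeI_three_connected :
    (strongColorGraph treeI 3).Connected := by
  let base : {α : Fin 6 → Fin 3 // IsStrongColoring treeI α} :=
    ⟨starColoring 0 1, isStrongColoring_starColoring Fin.zero_ne_one⟩
  have reachable_base (α) : (strongColorGraph treeI 3).Reachable α base :=
    (reachable_starColoring α.2).trans (reachable_starColoring_zero_one (α.2.1 treeI_adj_one_four))
  rw [SimpleGraph.connected_iff]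
  exact ⟨fun α β => (reachable_base α).trans (reachable_base β).symm, ⟨base⟩⟩
end

section
/- For every integer n ≥ 1, the strong colour graph S_3(Ψ_n) is not connected, where Ψ_n is the tree with vertices v_0, v_1, ..., v_n, w_1, w_2 and edges v_0v_i for 1 ≤ i ≤ n together with v_0w_1 and w_1w_2. -/
/-- The tree `Ψ_n` on `n + 3` vertices: vertex `0` is `v₀`, vertices `1,…,n`
are the leaves `v₁,…,vₙ`, vertex `n+1` is `w₁` and vertex `n+2` is `w₂`; the
edges are `v₀v₁, …, v₀vₙ, v₀w₁, w₁w₂`. -/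
def psiTree (n : ℕ) : SimpleGraph (Fin (n + 3)) :=
  SimpleGraph.fromRel (fun x y =>
    (x.val = 0 ∧ 1 ≤ y.val ∧ y.val ≤ n + 1) ∨ (x.val = n + 1 ∧ y.val = n + 2))

/-!
Recolouring a single vertex never changes the colour of `v₀`. Indeed, suppose two strong
colourings `α`, `β` differ only at `v₀`. The colour `β v₀` occurs in `α` at some vertex other
than `v₀`, which cannot be a neighbour of `v₀` (there `α` agrees with `β`); the only such vertex
is `w₂`, so `α w₂ = β v₀`, and symmetrically `β w₂ = α v₀`. As `α w₂ = β w₂`, this forces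
`α v₀ = β v₀`. Hence the colour of `v₀` is constant on each component of `S_3(Ψ_n)`, while
every colour occurs at `v₀` in some strong 3-colouring.
-/

namespace IsStrongColoring

variable {V : Type*} {k : ℕ} {G : SimpleGraph V} {α β : V → Fin k}

lemma comp_equiv (hα : IsStrongColoring G α) (σ : Equiv.Perm (Fin k)) :
    IsStrongColoring G (σ ∘ α) :=
  ⟨fun _ _ huv => σ.injective.ne (hα.1 huv), σ.surjective.comp hα.2⟩

lemma exists_not_adj_apply_eq_of_eqOn_compl (hα : IsStrongColoring G α)
    (hβ : IsStrongColoring G β) {v : V} (hne : α v ≠ β v) (hagree : ∀ u ≠ v, α u = β u) :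
    ∃ u ≠ v, ¬G.Adj v u ∧ α u = β v := by
  obtain ⟨u, hu⟩ := hα.2 (β v)
  have huv : u ≠ v := by rintro rfl; exact hne hu
  refine ⟨u, huv, fun hadj => hβ.1 hadj ?_, hu⟩
  rw [← hagree u huv, hu]

lemma apply_eq_of_eqOn_compl (hα : IsStrongColoring G α) (hβ : IsStrongColoring G β)
    {v w : V} (hw : ∀ u ≠ v, ¬G.Adj v u → u = w) (hagree : ∀ u ≠ v, α u = β u) :
    α v = β v := by
  by_contra hne
  obtain ⟨u, huv, hnadj, hαu⟩ := hα.exists_not_adj_apply_eq_of_eqOn_compl hβ hne hagree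
  obtain ⟨u', hu'v, hnadj', hβu'⟩ :=
    hβ.exists_not_adj_apply_eq_of_eqOn_compl hα (Ne.symm hne) fun u hu => (hagree u hu).symm
  have huw := hw u huv hnadj
  have hu'w := hw u' hu'v hnadj'
  apply hne
  calc α v = β w := by rw [← hu'w, hβu']
    _ = α w := (hagree w (huw ▸ huv)).symm
    _ = β v := by rw [← huw, hαu]

end IsStrongColoring

section strongColorGraph

variable {V : Type*} {k : ℕ} {G : SimpleGraph V} {v w : V}

lemma strongColorGraph_adj_apply_eq (hw : ∀ u ≠ v, ¬G.Adj v u → u = w)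
    {x y : {α : V → Fin k // IsStrongColoring G α}} (hxy : (strongColorGraph G k).Adj x y) :
    x.1 v = y.1 v := by
  by_contra hne
  obtain ⟨u, -, huniq⟩ := hxy
  obtain rfl := (huniq v hne).symm
  refine hne (x.2.apply_eq_of_eqOn_compl y.2 hw fun u' hu' => ?_)
  by_contra h
  exact hu' (huniq u' h)

lemma strongColorGraph_reachable_apply_eq (hw : ∀ u ≠ v, ¬G.Adj v u → u = w)
    {x y : {α : V → Fin k // IsStrongColoring G α}} (hxy : (strongColorGraph G k).Reachable x y) :
    x.1 v = y.1 v := by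
  obtain ⟨p⟩ := hxy
  induction p with
  | nil => rfl
  | cons hadj _ ih => exact (strongColorGraph_adj_apply_eq hw hadj).trans ih

end strongColorGraph

namespace psiTree

variable {n : ℕ}

lemma adj_iff {x y : Fin (n + 3)} :
    (psiTree n).Adj x y ↔
      (x.val = 0 ∧ 1 ≤ y.val ∧ y.val ≤ n + 1) ∨ (x.val = n + 1 ∧ y.val = n + 2) ∨
      (y.val = 0 ∧ 1 ≤ x.val ∧ x.val ≤ n + 1) ∨ (y.val = n + 1 ∧ x.val = n + 2) := by
  simp only [psiTree, SimpleGraph.fromRel_adj, ne_eq, Fin.ext_iff]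
  omega

lemma eq_last_of_not_adj_zero {u : Fin (n + 3)} (hu : u ≠ 0) (hnadj : ¬(psiTree n).Adj 0 u) :
    u = Fin.last (n + 2) := by
  rw [adj_iff] at hnadj
  rw [ne_eq, Fin.ext_iff] at hu
  ext
  simp only [Fin.val_zero, Fin.val_last, true_and] at *
  have := u.isLt
  omega

def baseColoring (n : ℕ) (x : Fin (n + 3)) : Fin 3 :=
  if x.val = 0 ∨ x.val = n + 2 then 0 else if x.val = n + 1 then 1 else 2

lemma isStrongColoring_baseColoring (hn : 1 ≤ n) :
    IsStrongColoring (psiTree n) (baseColoring n) := by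
  refine ⟨fun x y hxy => ?_, fun c => ?_⟩
  · rw [adj_iff] at hxy
    unfold baseColoring
    split_ifs <;> simp only [ne_eq, Fin.reduceEq, not_false_eq_true] <;> omega
  · fin_cases c
    · exact ⟨0, by simp [baseColoring]⟩
    · exact ⟨⟨n + 1, by omega⟩, by simp [baseColoring]⟩
    · exact ⟨⟨1, by omega⟩, by simp [baseColoring]; omega⟩

end psiTree

/-- For every `n ≥ 1`, the strong colour graph `S_3(Ψ_n)` is not connected. -/
theorem strongColorGraph_psiTree_three_not_connected
    {n : ℕ} (hn : 1 ≤ n) :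
    ¬(strongColorGraph (psiTree n) 3).Connected := by
  intro hconn
  have hbase := psiTree.isStrongColoring_baseColoring hn
  have hswap := hbase.comp_equiv (Equiv.swap 0 1)
  have hreach := hconn.preconnected ⟨_, hbase⟩ ⟨_, hswap⟩
  have hcolour := strongColorGraph_reachable_apply_eq
    (fun _ => psiTree.eq_last_of_not_adj_zero) hreach
  simp [psiTree.baseColoring] at hcolour
end
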